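/- Let M be a positive integer, let k be an integer with 1 ≤ k ≤ M, and set d = gcd(M,k). If M/d is even, then no fermionic binary word of length M is fixed by the rotation c_k, and the number of bosonic binary words of length M fixed by c_k equals 2^{d}. -/

import Mathlib

/-- Rotation of a binary word of length `M` by `k`: `(c_k · x)(i) = x (i + k)`. -/
def rot (M : ℕ) (k : ZMod M) (x : ZMod M → ZMod 2) : ZMod M → ZMod 2 :=
  fun i => x (i + k)

/-- A binary word is fermionic if it contains an odd number of ones. -/
def Fermionic (M : ℕ) [NeZero M] (x : ZMod M → ZMod 2) : Prop :=
  Odd (Finset.univ.filter (fun i : ZMod M => x i = 1)).card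

/-- A binary word is bosonic if it contains an even number of ones. -/
def Bosonic (M : ℕ) [NeZero M] (x : ZMod M → ZMod 2) : Prop :=
  Even (Finset.univ.filter (fun i : ZMod M => x i = 1)).card

/-!
A word fixed by `c_k` is periodic with period `k`. In `ZMod M` the multiples of `k` are, by
Bézout, exactly the kernel of the reduction `q : ZMod M → ZMod d`, so the fixed words are
exactly the pullbacks `y ∘ q` of the `2 ^ d` words `y` of length `d`. Every fibre of `q` has
`M / d` elements, so `y ∘ q` has `M / d` times as many ones as `y`: an even number.
-/

open Finset Function

theorem Function.periodic_iff_exists_comp_eq {G H α : Type*} [AddGroup G] [AddZeroClass H]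
    {q : G →+ H} (hq : Surjective q) {c : G} (hker : q.ker = AddSubgroup.zmultiples c)
    {x : G → α} : Periodic x c ↔ ∃ y : H → α, y ∘ q = x := by
  constructor
  · intro hx
    refine ⟨x ∘ surjInv hq, funext fun g => ?_⟩
    obtain ⟨n, hn⟩ := AddSubgroup.mem_zmultiples_iff.1 <|
      hker ▸ q.eq_iff.1 (surjInv_eq hq (q g))
    change x (surjInv hq (q g)) = x g
    rw [← add_neg_cancel_left g (surjInv hq (q g)), ← hn, hx.zsmul n g]
  · rintro ⟨y, rfl⟩ g
    have hc : q c = 0 := by rw [← AddMonoidHom.mem_ker, hker]; exact AddSubgroup.mem_zmultiples c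
    simp [map_add, hc]

theorem AddMonoidHom.card_filter_comp_eq_mul {G H : Type*} [AddGroup G] [Fintype G] [AddMonoid H]
    [Fintype H] [DecidableEq H] {q : G →+ H} (hq : Surjective q) (p : H → Prop) [DecidablePred p] :
    #{g | p (q g)} = #{h | p h} * #{g | q g = 0} := by
  rw [card_eq_sum_card_fiberwise (f := q) (t := {h | p h}) (fun g hg => by simpa using hg),
    sum_const_nat fun h hh => ?_]
  rw [← AddMonoidHom.card_fiber_eq_of_mem_range q (hq h) (hq 0), filter_filter]
  congr 1 with g
  simp only [mem_filter, mem_univ, true_and, and_iff_right_iff_imp]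
  rintro rfl
  simpa using hh

theorem ZMod.ker_castHom_gcd (M k : ℕ) :
    (ZMod.castHom (Nat.gcd_dvd_left M k) (ZMod (Nat.gcd M k)) : ZMod M →+ ZMod (Nat.gcd M k)).ker
      = AddSubgroup.zmultiples (k : ZMod M) := by
  refine le_antisymm (fun g hg => ?_) (AddSubgroup.zmultiples_le.2 ?_)
  · obtain ⟨n, rfl⟩ := ZMod.intCast_surjective g
    rw [AddMonoidHom.mem_ker, AddMonoidHom.coe_coe, map_intCast,
      ZMod.intCast_zmod_eq_zero_iff_dvd] at hg
    obtain ⟨t, rfl⟩ := hg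
    refine ⟨Nat.gcdB M k * t, ?_⟩
    rw [Nat.gcd_eq_gcd_ab]
    push_cast
    simp only [ZMod.natCast_self, zero_mul, zero_add, zsmul_eq_mul, Int.cast_mul]
    ring
  · rw [AddMonoidHom.mem_ker, AddMonoidHom.coe_coe, map_natCast, ZMod.natCast_eq_zero_iff]
    exact Nat.gcd_dvd_right M k

theorem ZMod.card_filter_castHom_eq_zero {M d : ℕ} [NeZero M] (h : d ∣ M) :
    #{i : ZMod M | ZMod.castHom h (ZMod d) i = 0} = M / d := by
  have : NeZero d := ⟨fun hd => NeZero.ne M (Nat.eq_zero_of_zero_dvd (hd ▸ h))⟩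
  have hcard := AddMonoidHom.card_filter_comp_eq_mul
    (q := (ZMod.castHom h (ZMod d) : ZMod M →+ ZMod d)) (ZMod.castHom_surjective h) fun _ => True
  simp only [filter_true, card_univ, ZMod.card] at hcard
  exact (Nat.div_eq_of_eq_mul_right (NeZero.pos d) hcard).symm

theorem rot_eq_self_iff_periodic {M : ℕ} {c : ZMod M} {x : ZMod M → ZMod 2} :
    rot M c x = x ↔ Periodic x c :=
  funext_iff

theorem fixed_words_of_rotation_even_case_general (M k : ℕ) [NeZero M]
    (d : ℕ) (hd : d = Nat.gcd M k)
    (heven : Even (M / d)) :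
    (¬ ∃ x : ZMod M → ZMod 2, rot M (k : ZMod M) x = x ∧ Fermionic M x)
    ∧ Nat.card {x : ZMod M → ZMod 2 // rot M (k : ZMod M) x = x ∧ Bosonic M x}
        = 2 ^ d := by
  subst hd
  have : NeZero (M.gcd k) := ⟨(Nat.gcd_pos_of_pos_left k (NeZero.pos M)).ne'⟩
  set q : ZMod M →+ ZMod (M.gcd k) := ↑(ZMod.castHom (Nat.gcd_dvd_left M k) (ZMod (M.gcd k)))
  have hq : Surjective q := ZMod.castHom_surjective (Nat.gcd_dvd_left M k)
  have fixed_iff (x : ZMod M → ZMod 2) : rot M k x = x ↔ x ∈ Set.range (· ∘ q) :=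
    rot_eq_self_iff_periodic.trans (periodic_iff_exists_comp_eq hq (ZMod.ker_castHom_gcd M k))
  have fixed_bosonic (x : ZMod M → ZMod 2) (hx : rot M k x = x) : Bosonic M x := by
    obtain ⟨y, rfl⟩ := (fixed_iff x).1 hx
    have hfiber : #{i | q i = 0} = M / M.gcd k :=
      ZMod.card_filter_castHom_eq_zero (Nat.gcd_dvd_left M k)
    change Even #{i | y (q i) = 1}
    rw [AddMonoidHom.card_filter_comp_eq_mul hq (y · = 1), hfiber]
    exact heven.mul_left _
  refine ⟨fun ⟨x, hx, hferm⟩ => Nat.not_even_iff_odd.2 hferm (fixed_bosonic x hx), ?_⟩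
  calc Nat.card {x : ZMod M → ZMod 2 // rot M k x = x ∧ Bosonic M x}
      = Nat.card (Set.range (· ∘ q : (ZMod (M.gcd k) → ZMod 2) → _)) :=
        Nat.card_congr <| Equiv.subtypeEquivRight fun x =>
          (and_iff_left_of_imp (fixed_bosonic x)).trans (fixed_iff x)
    _ = 2 ^ M.gcd k := by
      rw [Nat.card_range_of_injective hq.injective_comp_right, Nat.card_fun, Nat.card_zmod,
        Nat.card_zmod]

/-- Let `1 ≤ k ≤ M` and `d = gcd(M,k)`.  If `M/d` is even then no fermionic binary word
of length `M` is fixed by the rotation `c_k`, and there are exactly `2^d` bosonic binary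
words of length `M` fixed by `c_k`. -/
theorem fixed_words_of_rotation_even_case (M k : ℕ) [NeZero M]
    (hk1 : 1 ≤ k) (hk2 : k ≤ M) (d : ℕ) (hd : d = Nat.gcd M k)
    (heven : Even (M / d)) :
    (¬ ∃ x : ZMod M → ZMod 2, rot M (k : ZMod M) x = x ∧ Fermionic M x)
    ∧ Nat.card {x : ZMod M → ZMod 2 // rot M (k : ZMod M) x = x ∧ Bosonic M x}
        = 2 ^ d :=
  fixed_words_of_rotation_even_case_general M k d hd heven
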